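/- Let m ≥ 2, let q ≥ 2 be an integer, and let A be an m×m primitive binary matrix. Then the limit dim_M X_A^{(q)} = lim_{n→∞} (1/n) log_m #P(X_A^{(q)}, {1,…,n}) exists and equals (q − 1)² · Σ_{i=1}^{∞} log_m |A^{i−1}| / q^{i+1}. -/

import Mathlib

open Filter Topology

/-- Sequences over the alphabet `{0,…,m−1}`; coordinate `n` represents position `n+1`. -/
def ASeq (m : ℕ) : Type := ℕ → Fin m

open Classical in
/-- The distance `d(x,y) = m^{-min{i ≥ 1 : x_i ≠ y_i}}` on `Σ_m^ℕ`
(in the 0-based representation, `min{i ≥ 1 : x_i ≠ y_i} = firstDiff x y + 1`). -/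
noncomputable def aseqDist (m : ℕ) (x y : ASeq m) : ℝ :=
  if x = y then 0 else ((m : ℝ)⁻¹) ^ (PiNat.firstDiff x y + 1)

lemma aseqDist_self (m : ℕ) (x : ASeq m) : aseqDist m x x = 0 := by
  simp [aseqDist]

lemma aseqDist_comm (m : ℕ) (x y : ASeq m) : aseqDist m x y = aseqDist m y x := by
  unfold aseqDist
  by_cases h : x = y
  · simp [h]
  · rw [if_neg h, if_neg (Ne.symm h)]
    exact congrArg (fun k => ((m : ℝ)⁻¹) ^ (k + 1)) (PiNat.firstDiff_comm x y)

lemma aseqDist_triangle (m : ℕ) (x y z : ASeq m) :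
    aseqDist m x z ≤ aseqDist m x y + aseqDist m y z := by
  classical
  unfold aseqDist
  rcases Nat.eq_zero_or_pos m with hm | hm
  · subst hm; exact (x 0).elim0
  have hr0 : (0:ℝ) ≤ (m : ℝ)⁻¹ := by positivity
  have hr1 : (m : ℝ)⁻¹ ≤ 1 := by
    rw [inv_le_one_iff₀]; right; exact_mod_cast hm
  by_cases hxz : x = z
  · rw [if_pos hxz]
    have h1 : (0:ℝ) ≤ if x = y then 0 else ((m : ℝ)⁻¹) ^ (PiNat.firstDiff x y + 1) := by
      split <;> positivity
    have h2 : (0:ℝ) ≤ if y = z then 0 else ((m : ℝ)⁻¹) ^ (PiNat.firstDiff y z + 1) := by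
      split <;> positivity
    linarith
  · rw [if_neg hxz]
    by_cases hxy : x = y
    · subst hxy; rw [if_pos rfl, if_neg hxz]; simp
    by_cases hyz : y = z
    · subst hyz; rw [if_pos rfl, if_neg hxz]; simp
    rw [if_neg hxy, if_neg hyz]
    have hmin := PiNat.min_firstDiff_le x y z hxz
    have hpos1 : (0:ℝ) ≤ ((m : ℝ)⁻¹) ^ (PiNat.firstDiff x y + 1) := by positivity
    have hpos2 : (0:ℝ) ≤ ((m : ℝ)⁻¹) ^ (PiNat.firstDiff y z + 1) := by positivity
    rcases le_total (PiNat.firstDiff x y) (PiNat.firstDiff y z) with hcmp | hcmp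
    · have : ((m : ℝ)⁻¹) ^ (PiNat.firstDiff x z + 1) ≤
          ((m : ℝ)⁻¹) ^ (PiNat.firstDiff x y + 1) := by
        apply pow_le_pow_of_le_one hr0 hr1
        simp only [min_eq_left hcmp] at hmin; omega
      linarith
    · have : ((m : ℝ)⁻¹) ^ (PiNat.firstDiff x z + 1) ≤
          ((m : ℝ)⁻¹) ^ (PiNat.firstDiff y z + 1) := by
        apply pow_le_pow_of_le_one hr0 hr1
        simp only [min_eq_right hcmp] at hmin; omega
      linarith

lemma aseqDist_eq_zero (m : ℕ) (x y : ASeq m) (h : aseqDist m x y = 0) : x = y := by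
  by_contra hxy
  unfold aseqDist at h
  rw [if_neg hxy] at h
  rcases Nat.eq_zero_or_pos m with hm | hm
  · subst hm; exact (x 0).elim0
  have : (0:ℝ) < ((m : ℝ)⁻¹) ^ (PiNat.firstDiff x y + 1) := by positivity
  linarith

noncomputable instance ASeq.metricSpace (m : ℕ) : MetricSpace (ASeq m) where
  dist := aseqDist m
  dist_self := aseqDist_self m
  dist_comm := aseqDist_comm m
  dist_triangle := aseqDist_triangle m
  eq_of_dist_eq_zero := aseqDist_eq_zero m _ _

/-- The affine multiplicative subshift `X_A^{(p,q;a,b)}`: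
`A(x_{pk+a}, x_{qk+b}) = 1` for all `k ≥ 1` with `pk+a ≥ 1`, `qk+b ≥ 1`
(position `n ≥ 1` is coordinate `n−1`). -/
def affineSubshift (m : ℕ) (A : Matrix (Fin m) (Fin m) ℕ) (p q : ℕ) (a b : ℤ) :
    Set (ASeq m) :=
  {x | ∀ k : ℕ, 1 ≤ k → 1 ≤ (p : ℤ) * k + a → 1 ≤ (q : ℤ) * k + b →
      A (x (((p : ℤ) * k + a).toNat - 1)) (x (((q : ℤ) * k + b).toNat - 1)) = 1}

/-- The number of patterns of `X` on positions `{1,…,n}`. -/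
noncomputable def patternCount (m : ℕ) (X : Set (ASeq m)) (n : ℕ) : ℕ :=
  Set.ncard ((fun (x : ASeq m) (i : Fin n) => x i) '' X)

/-- `|B|`: the sum of all entries of a matrix. -/
def entrySum {m : ℕ} (B : Matrix (Fin m) (Fin m) ℕ) : ℕ := ∑ i, ∑ j, B i j

/-- The row sums `a_i` of a matrix. -/
def rowSum {m : ℕ} (A : Matrix (Fin m) (Fin m) ℕ) (i : Fin m) : ℕ := ∑ j, A i j

/-- The multiplicative shift of finite type `X_A^{(q)}`:
`A(x_i, x_{qi}) = 1` for all `i ≥ 1` (position `n ≥ 1` is coordinate `n−1`). -/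
def multSubshift (m : ℕ) (A : Matrix (Fin m) (Fin m) ℕ) (q : ℕ) : Set (ASeq m) :=
  {x | ∀ i : ℕ, 1 ≤ i → A (x (i - 1)) (x (q * i - 1)) = 1}

/-! Every position `p ≥ 1` is uniquely `q^t * j` with `q ∤ j`, and the constraints
`A(x_p, x_{qp}) = 1` only link consecutive positions of the same chain `j, qj, q²j, …`.
So the patterns on `{1,…,n}` are exactly the tuples of independent `A`-admissible words along
the chains, the chain of `j` having length `⌊log_q (n/j)⌋ + 1`, and there are `|A^L|` admissible
words of length `L + 1`. About `n (q-1)²/q^{L+2}` chains have length exactly `L + 1`, which gives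
the limit. Every such tuple is the restriction of a point of `X_A^{(q)}`: by primitivity each
symbol `i` has a successor `σ i` with `A(i, σ i) = 1`, and one continues each chain beyond `n`
by `σ`. -/

open Finset

theorem Matrix.exists_apply_ne_zero_of_pow_apply_ne_zero {ι R : Type*} [Fintype ι] [DecidableEq ι]
    [Semiring R] (A : Matrix ι ι R) {k : ℕ} (hk : k ≠ 0) {i j : ι} (h : (A ^ k) i j ≠ 0) :
    ∃ l, A i l ≠ 0 := by
  obtain ⟨k, rfl⟩ := Nat.exists_eq_succ_of_ne_zero hk
  rw [pow_succ', Matrix.mul_apply] at h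
  obtain ⟨l, -, hl⟩ := Finset.exists_ne_zero_of_sum_ne_zero h
  exact ⟨l, left_ne_zero_of_mul hl⟩

section AdmissibleWords

theorem Fintype.sum_fin_succ_pi {α β : Type*} [Fintype α] [AddCommMonoid β] {L : ℕ}
    (F : (Fin (L + 1) → α) → β) :
    ∑ w, F w = ∑ a, ∑ w : Fin L → α, F (Fin.cons a w) := by
  rw [← (Fin.consEquiv fun _ => α).sum_comp, Fintype.sum_prod_type]
  rfl

variable {α : Type*}

def pathWeight {R : Type*} [CommMonoid R] (A : Matrix α α R) {L : ℕ} (w : Fin (L + 1) → α) :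
    R :=
  ∏ t : Fin L, A (w t.castSucc) (w t.succ)

theorem pathWeight_cons {R : Type*} [CommMonoid R] (A : Matrix α α R) {L : ℕ} (i : α)
    (w : Fin (L + 1) → α) : pathWeight A (Fin.cons i w) = A i (w 0) * pathWeight A w := by
  simp [pathWeight, Fin.prod_univ_succ]

theorem Matrix.sum_pathWeight_cons [Fintype α] [DecidableEq α] {R : Type*} [CommSemiring R]
    (A : Matrix α α R) (L : ℕ) (i : α) :
    ∑ w : Fin L → α, pathWeight A (Fin.cons i w) = ∑ j, (A ^ L) i j := by
  induction L generalizing i with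
  | zero => simp [pathWeight, Matrix.one_apply]
  | succ L ih =>
    calc ∑ w : Fin (L + 1) → α, pathWeight A (Fin.cons i w)
        = ∑ l, A i l * ∑ w : Fin L → α, pathWeight A (Fin.cons l w) := by
          simp only [Fintype.sum_fin_succ_pi, pathWeight_cons, Fin.cons_zero, Finset.mul_sum]
      _ = ∑ j, (A ^ (L + 1)) i j := by
          simp only [ih, pow_succ', Matrix.mul_apply, Finset.mul_sum]
          exact Finset.sum_comm

def IsAdmissibleWord (A : Matrix α α ℕ) {L : ℕ} (w : Fin (L + 1) → α) : Prop :=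
  ∀ t : Fin L, A (w t.castSucc) (w t.succ) = 1

theorem card_isAdmissibleWord [Fintype α] [DecidableEq α] (A : Matrix α α ℕ)
    (hA : ∀ i j, A i j ≤ 1) (L : ℕ) :
    Nat.card {w : Fin (L + 1) → α // IsAdmissibleWord A w} = ∑ i, ∑ j, (A ^ L) i j := by
  classical
  have hweight (w : Fin (L + 1) → α) :
      (if IsAdmissibleWord A w then 1 else 0) = pathWeight A w := by
    split_ifs with hw
    · exact (Finset.prod_eq_one fun t _ => hw t).symm
    · obtain ⟨t, ht⟩ := not_forall.mp hw
      exact (Finset.prod_eq_zero (Finset.mem_univ t) (by grind)).symm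
  rw [Nat.card_eq_fintype_card, Fintype.card_subtype, Finset.card_filter,
    Fintype.sum_congr _ _ hweight, Fintype.sum_fin_succ_pi]
  exact Fintype.sum_congr _ _ fun i => A.sum_pathWeight_cons L i

end AdmissibleWords

section Chains

def chainStarts (q n : ℕ) : Finset ℕ := {j ∈ Icc 1 n | ¬ q ∣ j}

theorem mem_chainStarts {q n j : ℕ} : j ∈ chainStarts q n ↔ 1 ≤ j ∧ j ≤ n ∧ ¬ q ∣ j := by
  simp [chainStarts, and_assoc]

variable {q : ℕ}

theorem one_le_pow_mul (hq : 0 < q) {j : ℕ} (hj : 1 ≤ j) (t : ℕ) : 1 ≤ q ^ t * j :=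
  Nat.mul_pos (pow_pos hq t) hj

theorem pow_mul_le_iff_le_log (hq : 1 < q) {n j t : ℕ} (hj : 1 ≤ j) (hjn : j ≤ n) :
    q ^ t * j ≤ n ↔ t ≤ Nat.log q (n / j) := by
  rw [Nat.le_log_iff_pow_le hq (Nat.div_pos hjn hj).ne', Nat.le_div_iff_mul_le hj]

theorem pow_mul_le_of_mem_chainStarts (hq : 1 < q) {n j : ℕ} (hj : j ∈ chainStarts q n) {t : ℕ}
    (ht : t < Nat.log q (n / j) + 1) : q ^ t * j ≤ n := by
  obtain ⟨hj1, hjn, -⟩ := mem_chainStarts.mp hj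
  exact (pow_mul_le_iff_le_log hq hj1 hjn).mpr (Nat.le_of_lt_succ ht)

theorem divMaxPow_pow_mul (hq : 0 < q) {j : ℕ} (hj : ¬ q ∣ j) (t : ℕ) :
    (q ^ t * j).divMaxPow q = j := by
  rw [Nat.divMaxPow_base_pow_mul hq.ne']
  simp [Nat.divMaxPow, Nat.maxPowDvdDiv_of_not_dvd hj]

theorem padicValNat_pow_mul (hq : 1 < q) {j : ℕ} (hj : ¬ q ∣ j) (t : ℕ) :
    padicValNat q (q ^ t * j) = t := by
  have hj0 : j ≠ 0 := by rintro rfl; exact hj (dvd_zero q)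
  rw [padicValNat_base_pow_mul hq hj0, padicValNat.eq_zero_of_not_dvd hj, zero_add]

theorem divMaxPow_mem_chainStarts (hq : 1 < q) {n p : ℕ} (hp : 1 ≤ p) (hpn : p ≤ n) :
    p.divMaxPow q ∈ chainStarts q n := by
  have hd := Nat.pow_padicValNat_mul_divMaxPow q p
  refine mem_chainStarts.mpr ⟨Nat.pos_of_ne_zero ?_, ?_, Nat.not_dvd_divMaxPow hq (by omega)⟩
  · rintro h; rw [h, mul_zero] at hd; omega
  · exact (Nat.le_of_dvd (by omega) (Dvd.intro_left _ hd)).trans hpn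

theorem padicValNat_le_log_div_divMaxPow (hq : 1 < q) {n p : ℕ} (hp : 1 ≤ p) (hpn : p ≤ n) :
    padicValNat q p ≤ Nat.log q (n / p.divMaxPow q) := by
  obtain ⟨hj, hjn, -⟩ := mem_chainStarts.mp (divMaxPow_mem_chainStarts hq hp hpn)
  rwa [← pow_mul_le_iff_le_log hq hj hjn, Nat.pow_padicValNat_mul_divMaxPow]

/-- The index `a : Fin n` stands for the position `a + 1 = q ^ t * j`, which is sent to `⟨j, t⟩`. -/
def chainDecomposition (hq : 1 < q) (n : ℕ) :
    Fin n ≃ Σ j : chainStarts q n, Fin (Nat.log q (n / j) + 1) where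
  toFun a := ⟨⟨(a + 1 : ℕ).divMaxPow q, divMaxPow_mem_chainStarts hq (by omega) a.isLt⟩,
    ⟨padicValNat q (a + 1),
      Nat.lt_succ_of_le (padicValNat_le_log_div_divMaxPow hq (by omega) a.isLt)⟩⟩
  invFun jt := ⟨q ^ (jt.2 : ℕ) * jt.1 - 1, by
    have := pow_mul_le_of_mem_chainStarts hq jt.1.2 jt.2.isLt
    have := one_le_pow_mul (zero_lt_one.trans hq) (mem_chainStarts.mp jt.1.2).1 jt.2
    omega⟩
  left_inv a := Fin.ext (by simp)
  right_inv := by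
    rintro ⟨⟨j, hj⟩, t⟩
    obtain ⟨hj1, -, hjq⟩ := mem_chainStarts.mp hj
    have hp : q ^ (t : ℕ) * j - 1 + 1 = q ^ (t : ℕ) * j :=
      Nat.sub_add_cancel (one_le_pow_mul (zero_lt_one.trans hq) hj1 t)
    have hstart : (q ^ (t : ℕ) * j - 1 + 1).divMaxPow q = j := by
      rw [hp, divMaxPow_pow_mul (zero_lt_one.trans hq) hjq]
    refine Sigma.ext (Subtype.ext hstart) ((Fin.heq_ext_iff ?_).mpr ?_)
    · exact congrArg (fun j => Nat.log q (n / j) + 1) hstart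
    · simp only [hp, padicValNat_pow_mul hq hjq]

end Chains

section LocallyAdmissible

variable {α : Type*} {q : ℕ}

/-- The index `a : Fin n` stands for the position `a + 1`. -/
def IsLocallyAdmissible (A : Matrix α α ℕ) (q : ℕ) {n : ℕ} (u : Fin n → α) : Prop :=
  ∀ a b : Fin n, (b : ℕ) + 1 = q * (a + 1) → A (u a) (u b) = 1

def chainWordsEquiv (hq : 1 < q) (n : ℕ) :
    (Fin n → α) ≃ Π j : chainStarts q n, Fin (Nat.log q (n / j) + 1) → α :=
  ((chainDecomposition hq n).arrowCongr (Equiv.refl α)).trans (Equiv.piCurry fun _ _ => α)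

theorem chainWordsEquiv_apply (hq : 1 < q) {n : ℕ} (u : Fin n → α) (j : chainStarts q n)
    (t : Fin (Nat.log q (n / j) + 1)) :
    chainWordsEquiv hq n u j t = u ((chainDecomposition hq n).symm ⟨j, t⟩) := rfl

theorem isLocallyAdmissible_iff_forall_isAdmissibleWord (A : Matrix α α ℕ) (hq : 1 < q)
    {n : ℕ} (u : Fin n → α) :
    IsLocallyAdmissible A q u ↔ ∀ j, IsAdmissibleWord A (chainWordsEquiv hq n u j) := by
  constructor
  · intro hu j t
    have hj1 := (mem_chainStarts.mp j.2).1
    apply hu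
    have hq0 : 0 < q := zero_lt_one.trans hq
    simp only [chainDecomposition, Equiv.coe_fn_symm_mk, Fin.val_castSucc, Fin.val_succ,
      Nat.sub_add_cancel (one_le_pow_mul hq0 hj1 t),
      Nat.sub_add_cancel (one_le_pow_mul hq0 hj1 (t + 1))]
    ring
  · intro hu a b hab
    set x := chainDecomposition hq n a
    obtain ⟨hj1, hjn, -⟩ := mem_chainStarts.mp x.1.2
    have ha : (a : ℕ) + 1 = q ^ (x.2 : ℕ) * x.1 :=
      (Nat.pow_padicValNat_mul_divMaxPow q (a + 1)).symm
    have hb : (b : ℕ) + 1 = q ^ ((x.2 : ℕ) + 1) * x.1 := by rw [hab, ha]; ring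
    have ht : (x.2 : ℕ) < Nat.log q (n / x.1) :=
      (pow_mul_le_iff_le_log hq hj1 hjn).mp (by rw [← hb]; exact b.isLt)
    have := hu x.1 ⟨x.2, ht⟩
    simp only [chainWordsEquiv_apply, chainDecomposition, Equiv.coe_fn_symm_mk] at this
    convert this using 2 <;> refine congrArg u (Fin.ext ?_) <;>
      simp only [Fin.val_castSucc, Fin.val_succ] <;> omega

theorem card_isLocallyAdmissible [Fintype α] [DecidableEq α] (A : Matrix α α ℕ)
    (hA : ∀ i j, A i j ≤ 1) (hq : 1 < q) (n : ℕ) :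
    Nat.card {u : Fin n → α // IsLocallyAdmissible A q u} =
      ∏ j ∈ chainStarts q n, ∑ i, ∑ k, (A ^ Nat.log q (n / j)) i k := by
  rw [Nat.card_congr (Equiv.subtypeEquiv (q := fun W => ∀ j, IsAdmissibleWord A (W j))
      (chainWordsEquiv hq n) (isLocallyAdmissible_iff_forall_isAdmissibleWord A hq)),
    Nat.card_congr Equiv.subtypePiEquivPi, Nat.card_pi,
    ← Finset.prod_coe_sort (chainStarts q n) fun j => ∑ i, ∑ k, (A ^ Nat.log q (n / j)) i k]
  exact Fintype.prod_congr _ _ fun j => card_isAdmissibleWord A hA _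

end LocallyAdmissible

section Extension

variable {α : Type*} (σ : α → α) (d : α) (q : ℕ) {n : ℕ} (u : Fin n → α)

/-- The argument is a position, not a coordinate: `u` occupies the positions `1, …, n`. -/
def extendBySucc (p : ℕ) : α :=
  if h : 1 ≤ p ∧ p ≤ n then u ⟨p - 1, by omega⟩
  else if 1 < q ∧ q ∣ p ∧ 0 < p then σ (extendBySucc (p / q))
  else d
termination_by p
decreasing_by exact Nat.div_lt_self (by omega) (by omega)

theorem extendBySucc_of_le {p : ℕ} (h1 : 1 ≤ p) (h2 : p ≤ n) :
    extendBySucc σ d q u p = u ⟨p - 1, by omega⟩ := by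
  rw [extendBySucc, dif_pos ⟨h1, h2⟩]

theorem extendBySucc_mul {q : ℕ} (hq : 1 < q) {p : ℕ} (hp : n < q * p) :
    extendBySucc σ d q u (q * p) = σ (extendBySucc σ d q u p) := by
  rw [extendBySucc, dif_neg (by omega), if_pos ⟨hq, dvd_mul_right q p, by omega⟩,
    Nat.mul_div_cancel_left p (by omega)]

end Extension

section MultSubshift

variable {m : ℕ} {A : Matrix (Fin m) (Fin m) ℕ} {σ : Fin m → Fin m} {q : ℕ}

theorem image_restrict_multSubshift [NeZero m] (hσ : ∀ i, A i (σ i) = 1) (hq : 1 < q) (n : ℕ) :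
    (fun (x : ASeq m) (i : Fin n) => x i) '' multSubshift m A q =
      {u | IsLocallyAdmissible A q u} := by
  ext u
  constructor
  · rintro ⟨x, hx, rfl⟩ a b hab
    simpa [← hab] using hx (a + 1) (by omega)
  · intro hu
    refine ⟨fun k => extendBySucc σ 0 q u (k + 1), fun i hi => ?_, funext fun a => ?_⟩
    · have hqi : 1 ≤ q * i := Nat.mul_pos (by omega) hi
      show A (extendBySucc σ 0 q u (i - 1 + 1)) (extendBySucc σ 0 q u (q * i - 1 + 1)) = 1
      rw [Nat.sub_add_cancel hi, Nat.sub_add_cancel hqi]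
      by_cases h : q * i ≤ n
      · have hin : i ≤ n := le_trans (Nat.le_mul_of_pos_left i (by omega)) h
        rw [extendBySucc_of_le σ 0 q u hi hin, extendBySucc_of_le σ 0 q u hqi h]
        exact hu _ _ (by simp only [Nat.sub_add_cancel hi, Nat.sub_add_cancel hqi])
      · rw [extendBySucc_mul σ 0 u hq (by omega)]
        exact hσ _
    · simp [extendBySucc_of_le σ 0 q u (Nat.le_add_left 1 a) a.isLt]

theorem patternCount_multSubshift [NeZero m] (hA : ∀ i j, A i j ≤ 1) (hσ : ∀ i, A i (σ i) = 1)
    (hq : 1 < q) (n : ℕ) :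
    patternCount m (multSubshift m A q) n =
      ∏ j ∈ chainStarts q n, entrySum (A ^ Nat.log q (n / j)) := by
  rw [patternCount, image_restrict_multSubshift hσ hq, ← Nat.card_coe_set_eq]
  exact card_isLocallyAdmissible A hA hq n

theorem one_le_entrySum_pow [NeZero m] (hA : ∀ i j, A i j ≤ 1) (hσ : ∀ i, A i (σ i) = 1) (L : ℕ) :
    1 ≤ entrySum (A ^ L) := by
  rw [entrySum, ← card_isAdmissibleWord A hA L]
  have : Nonempty {w : Fin (L + 1) → Fin m // IsAdmissibleWord A w} :=
    ⟨fun t => σ^[t] 0, fun t => by simp [Function.iterate_succ_apply', hσ]⟩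
  exact Nat.card_pos

theorem entrySum_pow_le (hA : ∀ i j, A i j ≤ 1) (L : ℕ) : entrySum (A ^ L) ≤ m ^ (L + 1) := by
  rw [entrySum, ← card_isAdmissibleWord A hA L]
  simpa using Finite.card_subtype_le (IsAdmissibleWord A)

theorem abs_logb_entrySum_pow_le [NeZero m] (hm : 1 < m) (hA : ∀ i j, A i j ≤ 1)
    (hσ : ∀ i, A i (σ i) = 1) (L : ℕ) : |Real.logb m (entrySum (A ^ L))| ≤ L + 1 := by
  have hm1 : (1 : ℝ) < m := by exact_mod_cast hm
  have h1 : (1 : ℝ) ≤ entrySum (A ^ L) := by exact_mod_cast one_le_entrySum_pow hA hσ L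
  have h2 : (entrySum (A ^ L) : ℝ) ≤ (m : ℝ) ^ (L + 1) := by exact_mod_cast entrySum_pow_le hA L
  have h3 := Real.logb_le_logb_of_le hm1 (by positivity) h2
  rw [Real.logb_pow, Real.logb_self_eq_one hm1] at h3
  rw [abs_of_nonneg (Real.logb_nonneg hm1 h1)]
  push_cast at h3
  linarith

end MultSubshift

section ChainCounts

theorem chainStarts_mono (q : ℕ) : Monotone (chainStarts q) := fun _ _ h =>
  Finset.filter_subset_filter _ (Finset.Icc_subset_Icc_right h)

variable {q : ℕ}

theorem card_chainStarts_add_div (q M : ℕ) : #(chainStarts q M) + M / q = M := by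
  have h := card_filter_add_card_filter_not (s := Ioc 0 M) (fun j => q ∣ j)
  rw [Nat.Ioc_filter_dvd_card_eq_div, Nat.card_Ioc] at h
  have hIcc : Icc 1 M = Ioc 0 M := by ext; simp; omega
  rw [chainStarts, hIcc]
  omega

theorem filter_chainStarts_pow_mul_le (hq : 0 < q) (n k : ℕ) :
    {j ∈ chainStarts q n | q ^ k * j ≤ n} = chainStarts q (n / q ^ k) := by
  ext j
  have hk := Nat.one_le_pow k q hq
  simp only [mem_filter, mem_chainStarts, Nat.le_div_iff_mul_le (pow_pos hq k), mul_comm j]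
  constructor
  · rintro ⟨⟨h1, -, h3⟩, h4⟩; exact ⟨h1, h4, h3⟩
  · rintro ⟨h1, h2, h3⟩; exact ⟨⟨h1, le_trans (Nat.le_mul_of_pos_left j hk) h2, h3⟩, h2⟩

theorem filter_chainStarts_log_eq (hq : 1 < q) (n i : ℕ) :
    {j ∈ chainStarts q n | Nat.log q (n / j) = i} =
      chainStarts q (n / q ^ i) \ chainStarts q (n / q ^ (i + 1)) := by
  ext j
  rw [Finset.mem_sdiff, ← filter_chainStarts_pow_mul_le (by omega),
    ← filter_chainStarts_pow_mul_le (by omega), mem_filter, mem_filter, mem_filter]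
  by_cases hj : j ∈ chainStarts q n
  · obtain ⟨hj1, hjn, -⟩ := mem_chainStarts.mp hj
    rw [pow_mul_le_iff_le_log hq hj1 hjn, pow_mul_le_iff_le_log hq hj1 hjn]
    simp only [hj, true_and]
    omega
  · simp [hj]

theorem card_filter_chainStarts_log_eq (hq : 1 < q) (n i : ℕ) :
    (#{j ∈ chainStarts q n | Nat.log q (n / j) = i} : ℝ) =
      (n / q ^ i : ℕ) - 2 * (n / q ^ (i + 1) : ℕ) + (n / q ^ (i + 2) : ℕ) := by
  have hsub := chainStarts_mono q
    (Nat.div_le_div_left (Nat.pow_le_pow_right (by omega) i.le_succ) (pow_pos (by omega) i) :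
      n / q ^ (i + 1) ≤ n / q ^ i)
  have h1 := card_chainStarts_add_div q (n / q ^ i)
  have h2 := card_chainStarts_add_div q (n / q ^ (i + 1))
  have h3 := card_sdiff_add_card_eq_card hsub
  rw [Nat.div_div_eq_div_mul, ← pow_succ] at h1 h2
  rw [add_assoc, one_add_one_eq_two] at h2
  have h : #{j ∈ chainStarts q n | Nat.log q (n / j) = i} + 2 * (n / q ^ (i + 1)) =
      n / q ^ i + n / q ^ (i + 2) := by
    rw [filter_chainStarts_log_eq hq]
    omega
  have hR := congrArg (Nat.cast : ℕ → ℝ) h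
  push_cast at hR
  linarith

theorem tendsto_natCast_div_div_self {k : ℕ} (hk : 0 < k) :
    Tendsto (fun n : ℕ => ((n / k : ℕ) : ℝ) / n) atTop (𝓝 (1 / k)) := by
  refine ((tendsto_nat_floor_mul_div_atTop (by positivity)).comp
    tendsto_natCast_atTop_atTop).congr fun n => ?_
  simp [← Nat.floor_div_eq_div (K := ℝ), inv_mul_eq_div]

theorem tendsto_card_filter_chainStarts_log_eq_div (hq : 1 < q) (i : ℕ) :
    Tendsto (fun n : ℕ => (#{j ∈ chainStarts q n | Nat.log q (n / j) = i} : ℝ) / n) atTop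
      (𝓝 (((q : ℝ) - 1) ^ 2 / (q : ℝ) ^ (i + 2))) := by
  have h (k : ℕ) := tendsto_natCast_div_div_self (pow_pos (by omega : 0 < q) k)
  have hlim := ((h i).sub ((h (i + 1)).const_mul 2)).add (h (i + 2))
  simp_rw [card_filter_chainStarts_log_eq hq, add_div, sub_div, mul_div_assoc]
  convert hlim using 2
  have : (q : ℝ) ≠ 0 := by positivity
  push_cast
  field_simp
  ring

theorem card_filter_chainStarts_log_eq_le (hq : 1 < q) (n i : ℕ) :
    #{j ∈ chainStarts q n | Nat.log q (n / j) = i} ≤ n / q ^ i := by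
  calc #{j ∈ chainStarts q n | Nat.log q (n / j) = i} ≤ #(chainStarts q (n / q ^ i)) :=
        card_le_card (filter_chainStarts_log_eq hq n i ▸ sdiff_subset)
    _ ≤ n / q ^ i := (Nat.le_add_right _ _).trans_eq (card_chainStarts_add_div q _)

theorem card_filter_chainStarts_log_eq_div_le (hq : 1 < q) {n : ℕ} (hn : 0 < n) (i : ℕ) :
    (#{j ∈ chainStarts q n | Nat.log q (n / j) = i} : ℝ) / n ≤ (q : ℝ)⁻¹ ^ i := by
  rw [div_le_iff₀ (by positivity), inv_pow, ← div_eq_inv_mul]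
  exact (Nat.cast_le.mpr (card_filter_chainStarts_log_eq_le hq n i)).trans
    (by simpa using Nat.cast_div_le (α := ℝ) (m := n) (n := q ^ i))

theorem sum_chainStarts_eq_tsum (q n : ℕ) (f : ℕ → ℝ) :
    ∑ j ∈ chainStarts q n, f (Nat.log q (n / j)) =
      ∑' i, (#{j ∈ chainStarts q n | Nat.log q (n / j) = i} : ℝ) * f i := by
  rw [Finset.sum_comp, tsum_eq_sum (s := (chainStarts q n).image fun j => Nat.log q (n / j))]
  · simp only [nsmul_eq_mul]
  · intro i hi
    rw [card_eq_zero.mpr (filter_eq_empty_iff.mpr fun j hj hji => hi (mem_image.mpr ⟨j, hj, hji⟩)),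
      Nat.cast_zero, zero_mul]

theorem tendsto_sum_chainStarts_div (hq : 1 < q) (f : ℕ → ℝ) (C : ℝ)
    (hf : ∀ i, |f i| ≤ C * (i + 1)) :
    Tendsto (fun n : ℕ => (∑ j ∈ chainStarts q n, f (Nat.log q (n / j))) / n) atTop
      (𝓝 (((q : ℝ) - 1) ^ 2 * ∑' i, f i / (q : ℝ) ^ (i + 2))) := by
  have hr : ‖(q : ℝ)⁻¹‖ < 1 := by
    rw [norm_inv, Real.norm_natCast]; exact inv_lt_one_of_one_lt₀ (by exact_mod_cast hq)
  have hsum : Summable fun i : ℕ => C * ((i : ℝ) + 1) * (q : ℝ)⁻¹ ^ i := by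
    simpa [add_mul, mul_add, mul_assoc] using
      (((summable_pow_mul_geometric_of_norm_lt_one 1 hr).add
        (summable_geometric_of_norm_lt_one hr))).mul_left C
  have hlim := tendsto_tsum_of_dominated_convergence hsum
    (fun i => (tendsto_card_filter_chainStarts_log_eq_div hq i).mul_const (f i)) ?_
  · have hval : ∑' i, ((q : ℝ) - 1) ^ 2 / (q : ℝ) ^ (i + 2) * f i =
        ((q : ℝ) - 1) ^ 2 * ∑' i, f i / (q : ℝ) ^ (i + 2) := by
      rw [← tsum_mul_left]; congr 1; ext i; ring
    rw [← hval]
    refine hlim.congr fun n => ?_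
    rw [sum_chainStarts_eq_tsum, ← tsum_div_const]
    congr 1; ext i; ring
  · filter_upwards [eventually_gt_atTop 0] with n hn i
    have hcard := card_filter_chainStarts_log_eq_div_le hq hn i
    rw [norm_mul, Real.norm_eq_abs, Real.norm_eq_abs, abs_of_nonneg (by positivity)]
    calc _ ≤ (q : ℝ)⁻¹ ^ i * (C * (i + 1)) :=
          mul_le_mul hcard (hf i) (abs_nonneg _) (by positivity)
      _ = _ := by ring

end ChainCounts

/-- Kenyon–Peres–Solomyak, Theorem 1.1(1): the Minkowski dimension of `X_A^{(q)}` exists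
and equals `(q−1)² Σ_{i=1}^∞ log_m |A^{i−1}| / q^{i+1}`. -/
theorem minkowski_mult_sft
    (m : ℕ) (hm : 2 ≤ m) (q : ℕ) (hq : 2 ≤ q)
    (A : Matrix (Fin m) (Fin m) ℕ)
    (hbin : ∀ i j, A i j ≤ 1)
    (hprim : ∃ n : ℕ, 1 ≤ n ∧ ∀ i j : Fin m, 0 < (A ^ n) i j) :
    Filter.Tendsto
      (fun n : ℕ => Real.logb m (patternCount m (multSubshift m A q) n) / n)
      Filter.atTop
      (𝓝 (((q : ℝ) - 1) ^ 2 *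
        ∑' i : ℕ, Real.logb m (entrySum (A ^ i)) / (q : ℝ) ^ (i + 2))) := by
  have : NeZero m := ⟨by omega⟩
  obtain ⟨k, hk, hpos⟩ := hprim
  choose σ hσ using fun i => (A.exists_apply_ne_zero_of_pow_apply_ne_zero (by omega)
    (hpos i 0).ne').imp fun l hl => le_antisymm (hbin i l) (Nat.one_le_iff_ne_zero.mpr hl)
  refine (tendsto_sum_chainStarts_div hq _ 1 fun i => ?_).congr fun n => ?_
  · simpa using abs_logb_entrySum_pow_le hm hbin hσ i
  rw [patternCount_multSubshift hbin hσ hq, Nat.cast_prod, Real.logb_prod]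
  exact fun j _ => Nat.cast_ne_zero.mpr (Nat.one_le_iff_ne_zero.mp (one_le_entrySum_pow hbin hσ _))
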